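/- Let H be a real Hilbert space, D ⊆ H a symmetric dictionary with sup_{g∈D} ‖g‖ < ∞, γ ∈ (0,1], and u ∈ K₁(D) with u ≠ 0. Let g₁, …, g_n ∈ D, let H_m = span{g₁, …, g_m} with orthogonal projection P_m (and P₀ = 0), and set u_m = P_m u, r_m = u − u_m. Suppose g_n ∉ H_{n−1} and the weak selection condition ⟨g_n, r_{n−1}⟩ ≥ γ · sup_{g∈D} ⟨g, r_{n−1}⟩ holds. Then ‖r_n‖² ≤ ‖r_{n−1}‖² − γ² · ‖r_{n−1}‖⁴ / (‖u‖²_{K₁(D)} · ‖g_n − P_{n−1} g_n‖²). -/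

import Mathlib

open RealInnerProductSpace Pointwise

/-! The residual `r = u - u_{n-1}` is orthogonal to `H_{n-1}`, so `⟪u, r⟫ = ‖r‖²`; writing
`u = c • v` with `v ∈ B₁(D)` and bounding `⟪v, r⟫` by `sup_{g ∈ D} ⟪g, r⟫` (symmetry of `D`
controls the negative coefficients) gives the duality bound `‖r‖² ≤ ‖u‖_{K₁(D)} · sup_D ⟪g, r⟫`.
Since `q ∈ H_{n-1}`, `⟪g_n, r⟫ = ⟪e, r⟫` for `e = g_n - q`, and the projection onto `H_n` does
at least as well as the single step from `u_{n-1}` along `e`, which lowers `‖r‖²` by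
`⟪e, r⟫² / ‖e‖²`. The selection rule and the duality bound give `γ ‖r‖² ≤ ‖u‖_{K₁(D)} ⟪e, r⟫`. -/

/-- `BOne D` is the closure of the convex symmetric hull of the dictionary `D`:
the closure of the set of finite linear combinations `∑ aᵢ • gᵢ` with `gᵢ ∈ D`
and `∑ |aᵢ| ≤ 1`. -/
noncomputable def BOne {H : Type*} [NormedAddCommGroup H] [InnerProductSpace ℝ H]
    (D : Set H) : Set H :=
  closure {v : H | ∃ (n : ℕ) (a : Fin n → ℝ) (g : Fin n → H),
    (∀ i, g i ∈ D) ∧ (∑ i, |a i|) ≤ 1 ∧ v = ∑ i, a i • g i}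

/-- Membership in the variation space `K₁(D)`. -/
noncomputable def memK1 {H : Type*} [NormedAddCommGroup H] [InnerProductSpace ℝ H]
    (D : Set H) (v : H) : Prop :=
  ∃ c : ℝ, 0 < c ∧ v ∈ c • BOne D

/-- The variation norm `‖v‖_{K₁(D)} = inf {c > 0 : v ∈ c • B₁(D)}`. -/
noncomputable def varNorm {H : Type*} [NormedAddCommGroup H] [InnerProductSpace ℝ H]
    (D : Set H) (v : H) : ℝ :=
  sInf {c : ℝ | 0 < c ∧ v ∈ c • BOne D}

theorem Real.sSup_nonneg_of_neg_mem {S : Set ℝ} (hS : ∀ x ∈ S, -x ∈ S) : 0 ≤ sSup S := by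
  rcases S.eq_empty_or_nonempty with rfl | ⟨x, hx⟩
  · exact Real.sSup_empty.ge
  · rcases le_total 0 x with h | h
    · exact Real.sSup_nonneg' ⟨x, hx, h⟩
    · exact Real.sSup_nonneg' ⟨-x, hS x hx, neg_nonneg.mpr h⟩

section Dictionary

variable {H : Type*} [NormedAddCommGroup H] [InnerProductSpace ℝ H] {D : Set H}

theorem bddAbove_inner_image (hbdd : ∃ C : ℝ, ∀ g ∈ D, ‖g‖ ≤ C) (r : H) :
    BddAbove ((fun g => ⟪g, r⟫) '' D) := by
  obtain ⟨C, hC⟩ := hbdd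
  refine ⟨C * ‖r‖, Set.forall_mem_image.mpr fun g hg => ?_⟩
  exact (real_inner_le_norm g r).trans (mul_le_mul_of_nonneg_right (hC g hg) (norm_nonneg r))

theorem inner_le_of_mem_BOne (hsym : ∀ g ∈ D, -g ∈ D) {r : H} {M : ℝ} (hM0 : 0 ≤ M)
    (hM : ∀ g ∈ D, ⟪g, r⟫ ≤ M) {v : H} (hv : v ∈ BOne D) : ⟪v, r⟫ ≤ M := by
  have habs : ∀ g ∈ D, |⟪g, r⟫| ≤ M := fun g hg =>
    abs_le.mpr ⟨by simpa [inner_neg_left] using neg_le_neg (hM (-g) (hsym g hg)), hM g hg⟩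
  refine closure_minimal (t := {w | ⟪w, r⟫ ≤ M}) ?_
    (isClosed_le (continuous_id.inner continuous_const) continuous_const) hv
  rintro _ ⟨m, a, gs, hgs, ha, rfl⟩
  calc ⟪∑ i, a i • gs i, r⟫ = ∑ i, a i * ⟪gs i, r⟫ := by
        simp only [sum_inner, real_inner_smul_left]
    _ ≤ ∑ i, |a i| * M := Finset.sum_le_sum fun i _ =>
        (le_abs_self _).trans ((abs_mul _ _).trans_le
          (mul_le_mul_of_nonneg_left (habs _ (hgs i)) (abs_nonneg _)))
    _ = (∑ i, |a i|) * M := (Finset.sum_mul _ _ _).symm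
    _ ≤ M := mul_le_of_le_one_left hM0 ha

theorem varNorm_nonneg (D : Set H) (v : H) : 0 ≤ varNorm D v :=
  Real.sInf_nonneg fun _ hc => hc.1.le

theorem inner_le_varNorm_mul (hsym : ∀ g ∈ D, -g ∈ D) {r : H} {M : ℝ} (hM0 : 0 ≤ M)
    (hM : ∀ g ∈ D, ⟪g, r⟫ ≤ M) {v : H} (hv : memK1 D v) : ⟪v, r⟫ ≤ varNorm D v * M := by
  obtain ⟨c₀, hc₀⟩ := hv
  rw [varNorm, mul_comm, ← smul_eq_mul, ← Real.sInf_smul_of_nonneg hM0]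
  refine le_csInf (Set.Nonempty.smul_set ⟨c₀, hc₀⟩) ?_
  rintro _ ⟨c, ⟨hc, w, hw, rfl⟩, rfl⟩
  change ⟪c • w, r⟫ ≤ M * c
  rw [real_inner_smul_left, mul_comm M]
  exact mul_le_mul_of_nonneg_left (inner_le_of_mem_BOne hsym hM0 hM hw) hc.le

theorem inner_le_varNorm_mul_sSup (hsym : ∀ g ∈ D, -g ∈ D)
    (hbdd : ∃ C : ℝ, ∀ g ∈ D, ‖g‖ ≤ C) {v : H} (hv : memK1 D v) (r : H) :
    ⟪v, r⟫ ≤ varNorm D v * sSup ((fun g => ⟪g, r⟫) '' D) :=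
  inner_le_varNorm_mul hsym
    (Real.sSup_nonneg_of_neg_mem <| Set.forall_mem_image.mpr fun g hg =>
      ⟨-g, hsym g hg, inner_neg_left g r⟩)
    (fun g hg => le_csSup (bddAbove_inner_image hbdd r) ⟨g, hg, rfl⟩) hv

end Dictionary

section Projection

variable {H : Type*} [NormedAddCommGroup H] [InnerProductSpace ℝ H]

theorem norm_sub_sq_le_of_forall_inner_eq_zero {K : Submodule ℝ H} {u y w : H} (hy : y ∈ K)
    (horth : ∀ z ∈ K, ⟪u - y, z⟫ = 0) (hw : w ∈ K) : ‖u - y‖ ^ 2 ≤ ‖u - w‖ ^ 2 := by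
  have hpyth : ‖u - w‖ ^ 2 = ‖u - y‖ ^ 2 + ‖y - w‖ ^ 2 := by
    rw [← sub_add_sub_cancel u y w, norm_add_sq_real, horth _ (K.sub_mem hy hw)]
    ring
  rw [hpyth]
  exact le_add_of_nonneg_right (sq_nonneg _)

theorem norm_sub_inner_div_smul_sq (r e : H) :
    ‖r - (⟪e, r⟫ / ‖e‖ ^ 2) • e‖ ^ 2 = ‖r‖ ^ 2 - ⟪e, r⟫ ^ 2 / ‖e‖ ^ 2 := by
  rcases eq_or_ne e 0 with rfl | he
  · simp
  have he2 : ‖e‖ ^ 2 ≠ 0 := by positivity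
  rw [norm_sub_sq_real, real_inner_smul_right, norm_smul, mul_pow, Real.norm_eq_abs, sq_abs,
    real_inner_comm]
  field_simp
  ring

theorem norm_sub_sq_le_sub_inner_sq_div {K : Submodule ℝ H} {u y' y e : H} (hy' : y' ∈ K)
    (horth : ∀ z ∈ K, ⟪u - y', z⟫ = 0) (hy : y ∈ K) (he : e ∈ K) :
    ‖u - y'‖ ^ 2 ≤ ‖u - y‖ ^ 2 - ⟪e, u - y⟫ ^ 2 / ‖e‖ ^ 2 := by
  rw [← norm_sub_inner_div_smul_sq, sub_sub]
  exact norm_sub_sq_le_of_forall_inner_eq_zero hy' horth (K.add_mem hy (K.smul_mem _ he))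

end Projection

theorem sq_mul_pow_four_div_le {γ V M a b c : ℝ} (hγ : 0 ≤ γ) (hV : 0 ≤ V) (hc : 0 ≤ c)
    (hdual : a ^ 2 ≤ V * M) (hsel : γ * M ≤ b) : γ ^ 2 * a ^ 4 / (V ^ 2 * c) ≤ b ^ 2 / c := by
  rcases hV.eq_or_lt with rfl | hV
  · simp only [ne_eq, OfNat.ofNat_ne_zero, not_false_eq_true, zero_pow, zero_mul, div_zero]
    positivity
  have hlin : γ * a ^ 2 ≤ V * b := by nlinarith
  have hsq : (γ * a ^ 2) ^ 2 ≤ (V * b) ^ 2 := pow_le_pow_left₀ (by positivity) hlin 2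
  calc γ ^ 2 * a ^ 4 / (V ^ 2 * c) = (γ * a ^ 2) ^ 2 / (V ^ 2 * c) := by ring
    _ ≤ (V * b) ^ 2 / (V ^ 2 * c) := div_le_div_of_nonneg_right hsq (by positivity)
    _ = b ^ 2 / c := by rw [mul_pow, mul_div_mul_left _ _ (by positivity)]

theorem stmt16_general {H : Type*} [NormedAddCommGroup H] [InnerProductSpace ℝ H]
    (D : Set H) (hsym : ∀ g ∈ D, -g ∈ D)
    (hbdd : ∃ C : ℝ, ∀ g ∈ D, ‖g‖ ≤ C)
    (γ : ℝ) (hγ : γ ∈ Set.Ioc (0 : ℝ) 1)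
    (u : H) (hu : memK1 D u)
    (n : ℕ) (hn : 1 ≤ n)
    (g : ℕ → H)
    (Hs : ℕ → Submodule ℝ H)
    (hHs : ∀ m : ℕ, Hs m = Submodule.span ℝ (g '' Set.Icc 1 m))
    -- `uu m` is the orthogonal projection of `u` onto `H_m` (note `uu 0 = 0`
    -- since `H_0 = span ∅ = ⊥`):
    (uu : ℕ → H) (huu_mem : ∀ m : ℕ, uu m ∈ Hs m)
    (huu_orth : ∀ m : ℕ, ∀ w ∈ Hs m, ⟪u - uu m, w⟫ = 0)
    -- `q` is the orthogonal projection of `g n` onto `H_{n-1}`: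
    (q : H) (hq_mem : q ∈ Hs (n - 1))
    (hsel : γ * sSup ((fun g' => ⟪g', u - uu (n - 1)⟫) '' D) ≤ ⟪g n, u - uu (n - 1)⟫) :
    ‖u - uu n‖ ^ 2 ≤ ‖u - uu (n - 1)‖ ^ 2 -
      γ ^ 2 * ‖u - uu (n - 1)‖ ^ 4 / (varNorm D u ^ 2 * ‖g n - q‖ ^ 2) := by
  set r := u - uu (n - 1) with hr
  have hmono : Hs (n - 1) ≤ Hs n := by
    rw [hHs, hHs]
    exact Submodule.span_mono (Set.image_mono (Set.Icc_subset_Icc_right (Nat.sub_le n 1)))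
  have hgn : g n ∈ Hs n := hHs n ▸ Submodule.subset_span ⟨n, ⟨hn, le_rfl⟩, rfl⟩
  have hr_orth : ∀ w ∈ Hs (n - 1), ⟪w, r⟫ = 0 := fun w hw => by
    rw [real_inner_comm]
    exact huu_orth _ w hw
  have hdual : ‖r‖ ^ 2 ≤ varNorm D u * sSup ((fun g' => ⟪g', r⟫) '' D) := by
    have hur : ‖r‖ ^ 2 = ⟪u, r⟫ := by
      rw [← real_inner_self_eq_norm_sq, hr, inner_sub_left _ (uu _), hr_orth _ (huu_mem _),
        sub_zero]
    exact hur ▸ inner_le_varNorm_mul_sSup hsym hbdd hu r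
  have hsel' : γ * sSup ((fun g' => ⟪g', r⟫) '' D) ≤ ⟪g n - q, r⟫ := by
    rwa [inner_sub_left, hr_orth q hq_mem, sub_zero]
  have hreduce : ‖u - uu n‖ ^ 2 ≤ ‖r‖ ^ 2 - ⟪g n - q, r⟫ ^ 2 / ‖g n - q‖ ^ 2 :=
    norm_sub_sq_le_sub_inner_sq_div (huu_mem n) (huu_orth n) (hmono (huu_mem (n - 1)))
      (Submodule.sub_mem _ hgn (hmono hq_mem))
  exact hreduce.trans <| sub_le_sub_left (sq_mul_pow_four_div_le hγ.1.le (varNorm_nonneg D u)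
    (sq_nonneg _) hdual hsel') _

/-- Per-step contraction estimate of the weak orthogonal greedy algorithm:
with `H_m = span{g₁,…,g_m}`, `u_m = P_m u` the orthogonal projection of `u`
onto `H_m` (characterized by `u_m ∈ H_m` and `u - u_m ⟂ H_m`), `q = P_{n-1} g_n`,
`g_n ∉ H_{n-1}`, and the weak selection condition with parameter `γ`, one has
`‖r_n‖² ≤ ‖r_{n-1}‖² - γ² ‖r_{n-1}‖⁴ / (‖u‖²_{K₁(D)} ‖g_n - P_{n-1} g_n‖²)`. -/
theorem stmt16 {H : Type*} [NormedAddCommGroup H] [InnerProductSpace ℝ H] [CompleteSpace H]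
    (D : Set H) (hsym : ∀ g ∈ D, -g ∈ D)
    (hbdd : ∃ C : ℝ, ∀ g ∈ D, ‖g‖ ≤ C)
    (γ : ℝ) (hγ : γ ∈ Set.Ioc (0 : ℝ) 1)
    (u : H) (hu : memK1 D u) (hune : u ≠ 0)
    (n : ℕ) (hn : 1 ≤ n)
    (g : ℕ → H) (hgD : ∀ i : ℕ, 1 ≤ i → i ≤ n → g i ∈ D)
    (Hs : ℕ → Submodule ℝ H)
    (hHs : ∀ m : ℕ, Hs m = Submodule.span ℝ (g '' Set.Icc 1 m))
    -- `uu m` is the orthogonal projection of `u` onto `H_m` (note `uu 0 = 0`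
    -- since `H_0 = span ∅ = ⊥`):
    (uu : ℕ → H) (huu_mem : ∀ m : ℕ, uu m ∈ Hs m)
    (huu_orth : ∀ m : ℕ, ∀ w ∈ Hs m, ⟪u - uu m, w⟫ = 0)
    -- `q` is the orthogonal projection of `g n` onto `H_{n-1}`:
    (q : H) (hq_mem : q ∈ Hs (n - 1))
    (hq_orth : ∀ w ∈ Hs (n - 1), ⟪g n - q, w⟫ = 0)
    (hgn : g n ∉ Hs (n - 1))
    (hsel : γ * sSup ((fun g' => ⟪g', u - uu (n - 1)⟫) '' D) ≤ ⟪g n, u - uu (n - 1)⟫) :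
    ‖u - uu n‖ ^ 2 ≤ ‖u - uu (n - 1)‖ ^ 2 -
      γ ^ 2 * ‖u - uu (n - 1)‖ ^ 4 / (varNorm D u ^ 2 * ‖g n - q‖ ^ 2) :=
  stmt16_general D hsym hbdd γ hγ u hu n hn g Hs hHs uu huu_mem huu_orth q hq_mem hsel
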